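/- For c¹, c² ∈ ℝ with p + c¹ > 0, define k*(c¹, c²) = ( −δε − (c̄ − c²)λ/(r+δ) + √( (δε − (c̄ − c²)λ/(r+δ))² + 4δλh(p + c¹)/(r+δ) ) ) / (2δ). Then k* is strictly increasing in c¹ (for fixed c²) and strictly increasing in c² (for fixed c¹). -/

import Mathlib

/-- The equilibrium capacity when the subsidy to production has a part `c¹` proportional to
the spot price and a constant aggregated part `c²`. -/
noncomputable def kstarSub (r δ lam h p ε cbar c1 c2 : ℝ) : ℝ :=
  (-(δ * ε) - (cbar - c2) * lam / (r + δ)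
      + Real.sqrt ((δ * ε - (cbar - c2) * lam / (r + δ)) ^ 2
          + 4 * δ * lam * h * (p + c1) / (r + δ)))
    / (2 * δ)

/-! Monotonicity in `c¹` is monotonicity of the square root. For `c²`, write the numerator of
`k*` as `-2δε + (x + √(x² + C))` with `x = δε - (c̄ - c²)λ/(r+δ)` increasing in `c²` and
`C > 0`; the map `x ↦ x + √(x² + C)` is strictly increasing because `√(x² + C) > |x|`. -/

theorem Real.strictMono_add_sqrt_sq_add {C : ℝ} (hC : 0 < C) :
    StrictMono fun x : ℝ => x + √(x ^ 2 + C) := by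
  intro x y hxy
  have hy : -y < √(y ^ 2 + C) :=
    calc -y ≤ |y| := neg_le_abs y
      _ = √(y ^ 2) := (Real.sqrt_sq_eq_abs y).symm
      _ < √(y ^ 2 + C) := Real.sqrt_lt_sqrt (sq_nonneg y) (by linarith)
  have hx : √(x ^ 2 + C) < √(y ^ 2 + C) + (y - x) := by
    rw [Real.sqrt_lt' (by linarith [Real.sqrt_nonneg (y ^ 2 + C)])]
    nlinarith [Real.sq_sqrt (by positivity : 0 ≤ y ^ 2 + C)]
  simp only
  linarith

theorem kstarSub_strictMono_general
    (r δ lam h p ε cbar : ℝ)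
    (hr : 0 < r) (hδ : 0 < δ) (hlam : 0 < lam) (hh : 0 < h) :
    (∀ c1 c1' c2 : ℝ, 0 < p + c1 → 0 < p + c1' → c1 < c1' →
      kstarSub r δ lam h p ε cbar c1 c2 < kstarSub r δ lam h p ε cbar c1' c2) ∧
    (∀ c1 c2 c2' : ℝ, 0 < p + c1 → c2 < c2' →
      kstarSub r δ lam h p ε cbar c1 c2 < kstarSub r δ lam h p ε cbar c1 c2') := by
  constructor
  · intro c1 c1' c2 _ _ hc1
    unfold kstarSub
    gcongr
  · intro c1 c2 c2' hc1 hc2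
    have hb : (cbar - c2') * lam / (r + δ) < (cbar - c2) * lam / (r + δ) := by
      gcongr
    have hx := Real.strictMono_add_sqrt_sq_add
      (by positivity : 0 < 4 * δ * lam * h * (p + c1) / (r + δ))
      (by linarith : δ * ε - (cbar - c2) * lam / (r + δ) < δ * ε - (cbar - c2') * lam / (r + δ))
    unfold kstarSub
    gcongr ?_ / _
    linarith

/-- `k*(c¹, c²)` is strictly increasing in `c¹` (for fixed `c²`) and strictly increasing
in `c²` (for fixed `c¹`), on the domain `p + c¹ > 0`. -/
theorem kstarSub_strictMono
    (r δ lam h p ε cbar : ℝ)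
    (hr : 0 < r) (hδ : 0 < δ) (hlam : 0 < lam) (hh : 0 < h) (hp : 0 < p) (hε : 0 < ε) :
    (∀ c1 c1' c2 : ℝ, 0 < p + c1 → 0 < p + c1' → c1 < c1' →
      kstarSub r δ lam h p ε cbar c1 c2 < kstarSub r δ lam h p ε cbar c1' c2) ∧
    (∀ c1 c2 c2' : ℝ, 0 < p + c1 → c2 < c2' →
      kstarSub r δ lam h p ε cbar c1 c2 < kstarSub r δ lam h p ε cbar c1 c2') :=
  kstarSub_strictMono_general r δ lam h p ε cbar hr hδ hlam hh
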